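/- For every 1 ≤ k < l ≤ n the following polynomial identities hold in R_n: (i) if 1 ≤ i ≤ k and l+1 ≤ j ≤ n, then {x_{ij}, Δ_{l;k}}·Δ'_{l;l−k} − Δ_{l;k}·{x_{ij}, Δ'_{l;l−k}} = −x_{ij}·Δ_{l;k}·Δ'_{l;l−k}; (ii) if l+1 ≤ i ≤ n and 1 ≤ j ≤ l−k, then {x_{ij}, Δ_{l;k}}·Δ'_{l;l−k} − Δ_{l;k}·{x_{ij}, Δ'_{l;l−k}} = x_{ij}·Δ_{l;k}·Δ'_{l;l−k}. (Equivalently, {x_{ij}, Δ_{l;k}/Δ'_{l;l−k}} = ε·x_{ij}·Δ_{l;k}/Δ'_{l;l−k} with ε = −1 in case (i) and ε = 1 in case (ii).) -/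

import Mathlib

open MvPolynomial

/-- The quadratic Poisson bracket on the polynomial algebra of the matrix affine
Poisson space `M_{m,n}`. -/
noncomputable def pois {m n : ℕ} (f g : MvPolynomial (Fin m × Fin n) ℂ) :
    MvPolynomial (Fin m × Fin n) ℂ :=
  ∑ i : Fin m, ∑ k : Fin m, ∑ j : Fin n, ∑ l : Fin n,
    (((k : ℤ) - (i : ℤ)).sign + ((l : ℤ) - (j : ℤ)).sign) •
      (X (i, l) * X (k, j) * pderiv (i, j) f * pderiv (k, l) g)

/-- The minor `Δ_{I,J}` (equal to `0` by convention if `|I| ≠ |J|`). -/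
noncomputable def Delta {m n : ℕ} (I : Finset (Fin m)) (J : Finset (Fin n)) :
    MvPolynomial (Fin m × Fin n) ℂ :=
  if h : J.card = I.card then
    Matrix.det (Matrix.of fun a b : Fin I.card =>
      X ((I.orderIsoOfFin rfl a).1, (J.orderIsoOfFin h b).1))
  else 0

/-- The coordinate ring `R_n = ℂ[x_{ij}]` of `M_n`. -/
abbrev Rn (n : ℕ) := MvPolynomial (Fin n × Fin n) ℂ

/-- The field of rational functions `F_n = ℂ(M_n)`. -/
abbrev Fn (n : ℕ) := FractionRing (Rn n)

/-- The interval `[a,b]` (in 1-based indexing) inside `{1,…,n}`, as a finset of `Fin n`. -/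
def iv (n a b : ℕ) : Finset (Fin n) :=
  Finset.univ.filter fun i => a ≤ (i : ℕ) + 1 ∧ (i : ℕ) + 1 ≤ b

/-- `Δ_{l;k}`: the upper-right `k×k` minor of the principal `l×l` submatrix. -/
noncomputable def Dul (n l k : ℕ) : Rn n := Delta (iv n 1 k) (iv n (l - k + 1) l)

/-- `Δ'_{l;k}`: the lower-left `k×k` minor of the principal `l×l` submatrix. -/
noncomputable def Dll (n l k : ℕ) : Rn n := Delta (iv n (l - k + 1) l) (iv n 1 k)

/-- `Δ_l`: the principal `l×l` minor. -/
noncomputable def Dpr (n l : ℕ) : Rn n := Delta (iv n 1 l) (iv n 1 l)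

/-- The extension of the quadratic Poisson bracket to the field of rational functions,
determined by `{P/Q, S/T} = ({P,S}QT − {P,T}QS − {Q,S}PT + {Q,T}PS)/(Q²T²)`. -/
noncomputable def poisF (n : ℕ) (f g : Fn n) : Fn n :=
  let φ := algebraMap (Rn n) (Fn n)
  let P := (IsLocalization.sec (nonZeroDivisors (Rn n)) f).1
  let Q := ((IsLocalization.sec (nonZeroDivisors (Rn n)) f).2 : Rn n)
  let S := (IsLocalization.sec (nonZeroDivisors (Rn n)) g).1
  let T := ((IsLocalization.sec (nonZeroDivisors (Rn n)) g).2 : Rn n)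
  (φ (pois P S) * φ Q * φ T - φ (pois P T) * φ Q * φ S
    - φ (pois Q S) * φ P * φ T + φ (pois Q T) * φ P * φ S)
    / (φ Q ^ 2 * φ T ^ 2)

/-! Left bracketing with a generator is a derivation, with
`{x_ij, x_ab} = (sign(a - i) + sign(b - j)) x_ib x_aj`, so the bracket of `x_ij` with a minor is
a sum of determinants, each with one row differentiated. If `i` is a row of the minor and `j` lies
right of all its columns, the differentiated row `a` is `(sign(a - i) - 1) x_aj` times row `i`,
so only row `i` survives and contributes `-x_ij` times the minor; the case of a column `j` with
`i` below all rows is the transpose. If `x_ij` lies strictly above-right or below-left of every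
entry, all coefficients vanish. In case (i) `Δ_{l;k}` is of the first kind and `Δ'_{l;l-k}` of
the last, in case (ii) the other way round. -/

namespace Derivation

variable {R A : Type*} [CommSemiring R] [CommRing A] [Algebra R A] (D : Derivation R A A)

theorem leibniz_finset_prod {ι : Type*} [DecidableEq ι] (s : Finset ι) (f : ι → A) :
    D (∏ i ∈ s, f i) = ∑ i ∈ s, (∏ j ∈ s.erase i, f j) * D (f i) := by
  induction s using Finset.induction_on with
  | empty => simp
  | @insert a s ha ih =>
    rw [Finset.prod_insert ha, leibniz, smul_eq_mul, smul_eq_mul, ih, Finset.mul_sum,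
      Finset.sum_insert ha, Finset.erase_insert ha, add_comm]
    congr 1
    refine Finset.sum_congr rfl fun i hi => ?_
    rw [Finset.erase_insert_of_ne (ne_of_mem_of_not_mem hi ha).symm,
      Finset.prod_insert fun h => ha (Finset.mem_of_mem_erase h)]
    ring

variable {n : Type*} [Fintype n] [DecidableEq n]

theorem map_det (M : Matrix n n A) :
    D M.det = ∑ a, (M.updateRow a fun b => D (M a b)).det := by
  simp only [Matrix.det_apply, map_sum, Units.smul_def, map_zsmul, leibniz_finset_prod]
  rw [Finset.sum_comm]
  refine Finset.sum_congr rfl fun σ _ => ?_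
  rw [Finset.smul_sum]
  refine Fintype.sum_equiv σ _ _ fun i => ?_
  rw [← Finset.prod_erase_mul _ _ (Finset.mem_univ i), Matrix.updateRow_self]
  congr 2
  refine Finset.prod_congr rfl fun j hj => ?_
  rw [Matrix.updateRow_ne (σ.injective.ne (Finset.ne_of_mem_erase hj))]

theorem map_det_eq_zero_of_forall_map_eq_zero (M : Matrix n n A) (h : ∀ a b, D (M a b) = 0) :
    D M.det = 0 := by
  rw [map_det]
  exact Finset.sum_eq_zero fun a _ =>
    Matrix.det_eq_zero_of_row_eq_zero a fun b => by simp [h]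

theorem map_det_eq_mul_of_map_eq_mul_row (M : Matrix n n A) (a₀ : n) (c : n → A)
    (h : ∀ a b, D (M a b) = c a * M a₀ b) : D M.det = c a₀ * M.det := by
  have hrow : ∀ a, (M.updateRow a fun b => D (M a b)).det = c a * (M.updateRow a (M a₀)).det :=
    fun a => by rw [← Matrix.det_updateRow_smul]; congr; ext b; simp [h]
  rw [map_det, Finset.sum_congr rfl fun a _ => hrow a, Finset.sum_eq_single a₀
    (fun a _ ha => by rw [Matrix.det_updateRow_eq_zero ha.symm, mul_zero]) (by simp),
    Matrix.updateRow_eq_self]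

theorem map_det_eq_mul_of_map_eq_mul_col (M : Matrix n n A) (b₀ : n) (c : n → A)
    (h : ∀ a b, D (M a b) = c b * M a b₀) : D M.det = c b₀ * M.det := by
  rw [← Matrix.det_transpose]
  exact map_det_eq_mul_of_map_eq_mul_row D M.transpose b₀ c fun b a => h a b

end Derivation

section Hamiltonian

variable {m n : ℕ}

noncomputable def hamiltonian (f : MvPolynomial (Fin m × Fin n) ℂ) :
    Derivation ℂ (MvPolynomial (Fin m × Fin n) ℂ) (MvPolynomial (Fin m × Fin n) ℂ) :=
  ∑ i : Fin m, ∑ k : Fin m, ∑ j : Fin n, ∑ l : Fin n,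
    ((((k : ℤ) - (i : ℤ)).sign + ((l : ℤ) - (j : ℤ)).sign) •
      (X (i, l) * X (k, j) * pderiv (i, j) f)) • pderiv (k, l)

theorem hamiltonian_apply (f g : MvPolynomial (Fin m × Fin n) ℂ) :
    hamiltonian f g = pois f g := by
  rw [← Derivation.coeFnAddMonoidHom_apply, hamiltonian, pois]
  simp only [map_sum, Finset.sum_apply, Derivation.coeFnAddMonoidHom_apply, Derivation.smul_apply,
    smul_eq_mul, smul_mul_assoc]

theorem pois_X_X (i k : Fin m) (j l : Fin n) :
    pois (X (i, j)) (X (k, l)) =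
      (((k : ℤ) - (i : ℤ)).sign + ((l : ℤ) - (j : ℤ)).sign) • (X (i, l) * X (k, j)) := by
  simp [pois, pderiv_X, Pi.single_apply, ite_and, Finset.sum_ite_irrel]

end Hamiltonian

section Minors

variable {m n : ℕ} (i : Fin m) (j : Fin n) (I : Finset (Fin m)) (J : Finset (Fin n))

theorem pois_X_Delta_eq_zero
    (h : ∀ a ∈ I, ∀ b ∈ J, ((a : ℤ) - (i : ℤ)).sign + ((b : ℤ) - (j : ℤ)).sign = 0) :
    pois (X (i, j)) (Delta I J) = 0 := by
  rw [← hamiltonian_apply, Delta]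
  split_ifs with hc
  · refine Derivation.map_det_eq_zero_of_forall_map_eq_zero _ _ fun a b => ?_
    rw [Matrix.of_apply, hamiltonian_apply, pois_X_X, h _ (Subtype.prop _) _ (Subtype.prop _),
      zero_smul]
  · exact map_zero _

theorem pois_X_Delta_eq_neg_mul_of_mem_rows (hc : J.card = I.card) (hi : i ∈ I)
    (hJ : ∀ b ∈ J, b < j) :
    pois (X (i, j)) (Delta I J) = -(X (i, j) * Delta I J) := by
  rw [← hamiltonian_apply, Delta, dif_pos hc]
  set eI := I.orderIsoOfFin rfl
  set eJ := J.orderIsoOfFin hc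
  have hi₀ : (eI (eI.symm ⟨i, hi⟩) : Fin m) = i := by simp
  refine (Derivation.map_det_eq_mul_of_map_eq_mul_row _ _ (eI.symm ⟨i, hi⟩)
    (fun a => ((((eI a : Fin m) : ℤ) - i).sign - 1) • X ((eI a : Fin m), j)) fun a b => ?_).trans ?_
  · have hb : ((eJ b : Fin n) : ℤ) - j < 0 := by have := hJ _ (eJ b).2; omega
    simp only [Matrix.of_apply, hamiltonian_apply, pois_X_X, hi₀, Int.sign_eq_neg_one_of_neg hb,
      zsmul_eq_mul]
    push_cast
    ring
  · simp

theorem pois_X_Delta_eq_neg_mul_of_mem_cols (hc : J.card = I.card) (hj : j ∈ J)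
    (hI : ∀ a ∈ I, a < i) :
    pois (X (i, j)) (Delta I J) = -(X (i, j) * Delta I J) := by
  rw [← hamiltonian_apply, Delta, dif_pos hc]
  set eI := I.orderIsoOfFin rfl
  set eJ := J.orderIsoOfFin hc
  have hj₀ : (eJ (eJ.symm ⟨j, hj⟩) : Fin n) = j := by simp
  refine (Derivation.map_det_eq_mul_of_map_eq_mul_col _ _ (eJ.symm ⟨j, hj⟩)
    (fun b => ((((eJ b : Fin n) : ℤ) - j).sign - 1) • X (i, (eJ b : Fin n))) fun a b => ?_).trans ?_
  · have ha : ((eI a : Fin m) : ℤ) - i < 0 := by have := hI _ (eI a).2; omega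
    simp only [Matrix.of_apply, hamiltonian_apply, pois_X_X, hj₀, Int.sign_eq_neg_one_of_neg ha,
      zsmul_eq_mul]
    push_cast
    ring
  · simp

end Minors

theorem mem_iv {n a b : ℕ} {i : Fin n} : i ∈ iv n a b ↔ a ≤ (i : ℕ) + 1 ∧ (i : ℕ) + 1 ≤ b := by
  simp [iv]

theorem card_iv {n a b : ℕ} (ha : 1 ≤ a) (hb : b ≤ n) : (iv n a b).card = b + 1 - a := by
  have hlt : ∀ m ∈ Finset.Ico (a - 1) b, m < n := fun m hm => (Finset.mem_Ico.1 hm).2.trans_le hb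
  have hiv : iv n a b = (Finset.Ico (a - 1) b).attachFin hlt := by
    ext i
    rw [mem_iv, Finset.mem_attachFin, Finset.mem_Ico]
    omega
  rw [hiv, Finset.card_attachFin, Nat.card_Ico]
  omega

theorem GZ_bracket_exponential_cases_general (n k l : ℕ) (hkl : k < l) (hln : l ≤ n)
    (i j : Fin n) :
    ((i : ℕ) + 1 ≤ k → l + 1 ≤ (j : ℕ) + 1 →
      pois (X (i, j)) (Dul n l k) * Dll n l (l - k)
          - Dul n l k * pois (X (i, j)) (Dll n l (l - k))
        = -(X (i, j) * Dul n l k * Dll n l (l - k))) ∧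
    (l + 1 ≤ (i : ℕ) + 1 → (j : ℕ) + 1 ≤ l - k →
      pois (X (i, j)) (Dul n l k) * Dll n l (l - k)
          - Dul n l k * pois (X (i, j)) (Dll n l (l - k))
        = X (i, j) * Dul n l k * Dll n l (l - k)) := by
  have hcard_ul : (iv n (l - k + 1) l).card = (iv n 1 k).card := by
    rw [card_iv (by omega) hln, card_iv le_rfl (by omega)]; omega
  have hcard_ll : (iv n 1 (l - k)).card = (iv n (l - (l - k) + 1) l).card := by
    rw [card_iv le_rfl (by omega), card_iv (by omega) hln]; omega
  constructor
  · intro hik hlj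
    have hul : pois (X (i, j)) (Dul n l k) = -(X (i, j) * Dul n l k) :=
      pois_X_Delta_eq_neg_mul_of_mem_rows _ _ _ _ hcard_ul (mem_iv.2 ⟨by omega, hik⟩)
        fun b hb => by rw [mem_iv] at hb; omega
    have hll : pois (X (i, j)) (Dll n l (l - k)) = 0 :=
      pois_X_Delta_eq_zero _ _ _ _ fun a ha b hb => by
        rw [mem_iv] at ha hb
        rw [Int.sign_eq_one_of_pos (by omega), Int.sign_eq_neg_one_of_neg (by omega)]; rfl
    rw [hul, hll]
    ring
  · intro hli hjl
    have hul : pois (X (i, j)) (Dul n l k) = 0 :=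
      pois_X_Delta_eq_zero _ _ _ _ fun a ha b hb => by
        rw [mem_iv] at ha hb
        rw [Int.sign_eq_neg_one_of_neg (by omega), Int.sign_eq_one_of_pos (by omega)]; rfl
    have hll : pois (X (i, j)) (Dll n l (l - k)) = -(X (i, j) * Dll n l (l - k)) :=
      pois_X_Delta_eq_neg_mul_of_mem_cols _ _ _ _ hcard_ll (mem_iv.2 ⟨le_add_self, hjl⟩)
        fun a ha => by rw [mem_iv] at ha; omega
    rw [hul, hll]
    ring

/-- **Case 2 of the Gelfand–Zeitlin flow computation:**
`{x_{ij}, Δ_{l;k}/Δ'_{l;l−k}} = ε·x_{ij}·Δ_{l;k}/Δ'_{l;l−k}` with `ε = −1` when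
`1 ≤ i ≤ k`, `l+1 ≤ j ≤ n`, and `ε = 1` when `l+1 ≤ i ≤ n`, `1 ≤ j ≤ l−k`,
stated as polynomial identities in `Rₙ`. -/
theorem GZ_bracket_exponential_cases (n k l : ℕ) (hk : 1 ≤ k) (hkl : k < l) (hln : l ≤ n)
    (i j : Fin n) :
    ((i : ℕ) + 1 ≤ k → l + 1 ≤ (j : ℕ) + 1 →
      pois (X (i, j)) (Dul n l k) * Dll n l (l - k)
          - Dul n l k * pois (X (i, j)) (Dll n l (l - k))
        = -(X (i, j) * Dul n l k * Dll n l (l - k))) ∧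
    (l + 1 ≤ (i : ℕ) + 1 → (j : ℕ) + 1 ≤ l - k →
      pois (X (i, j)) (Dul n l k) * Dll n l (l - k)
          - Dul n l k * pois (X (i, j)) (Dll n l (l - k))
        = X (i, j) * Dul n l k * Dll n l (l - k)) :=
  GZ_bracket_exponential_cases_general n k l hkl hln i j
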